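/- If G, F : (-1,1) → ℂ are smooth and satisfy (1+x)G' + (1/2+n)G = λ̃F and (x-1)F' + (1/2+n)F = λ̃G, then G satisfies the Jacobi differential equation (1-x²)G'' + (β₂ - β₁ - (β₁+β₂+2)x)G' + l(l+β₁+β₂+1)G = 0 with β₁ = n - 1/2, β₂ = n + 1/2, and l = |λ̃| - n - 1/2, provided λ̃ ≠ 0 and |λ̃|² = λ̃² (i.e. λ̃ real). -/

import Mathlib

open Set

theorem first_order_system_implies_jacobi_ode
    (n : ℝ) (lam : ℝ) (hlam : lam ≠ 0)
    (G F : ℝ → ℂ) (hG : ContDiff ℝ (⊤ : ℕ∞) G) (hF : ContDiff ℝ (⊤ : ℕ∞) F)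
    (hsys1 : ∀ x ∈ Ioo (-1 : ℝ) 1,
      ((1 + x : ℝ) : ℂ) * deriv G x + ((1/2 + n : ℝ) : ℂ) * G x = (lam : ℂ) * F x)
    (hsys2 : ∀ x ∈ Ioo (-1 : ℝ) 1,
      ((x - 1 : ℝ) : ℂ) * deriv F x + ((1/2 + n : ℝ) : ℂ) * F x = (lam : ℂ) * G x) :
    ∀ x ∈ Ioo (-1 : ℝ) 1,
      ((1 - x^2 : ℝ) : ℂ) * deriv (deriv G) x +
        ((((n + 1/2) - (n - 1/2)) - (((n - 1/2) + (n + 1/2)) + 2) * x : ℝ) : ℂ) * deriv G x +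
        (((|lam| - n - 1/2) * ((|lam| - n - 1/2) + (n - 1/2) + (n + 1/2) + 1) : ℝ) : ℂ) * G x
        = 0 := by
  intro x hx
  have hmem : Ioo (-1 : ℝ) 1 ∈ nhds x := isOpen_Ioo.mem_nhds hx
  have hG' : ContDiff ℝ ((⊤ : ℕ∞) : WithTop ℕ∞) (deriv G) :=
    (contDiff_infty_iff_deriv.mp (hG.of_le (by simp))).2
  have hGd : DifferentiableAt ℝ G x := (hG.differentiable (by simp)) x
  have hG'd : DifferentiableAt ℝ (deriv G) x := (hG'.differentiable (by simp)) x
  have hFd : DifferentiableAt ℝ F x := (hF.differentiable (by simp)) x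
  -- derivative of x ↦ (1+x : ℂ)
  have hlin : HasDerivAt (fun y : ℝ => ((1 + y : ℝ) : ℂ)) 1 x := by
    have h := Complex.ofRealCLM.hasDerivAt (x := x)
    have h2 : HasDerivAt (fun y : ℝ => (y : ℂ)) 1 x := by simpa using (hasDerivAt_id x).ofReal_comp
    simpa using h2.const_add (1 : ℂ)
  have hlhs : HasDerivAt (fun y : ℝ => ((1 + y : ℝ) : ℂ) * deriv G y + ((1/2 + n : ℝ) : ℂ) * G y)
      (1 * deriv G x + ((1 + x : ℝ) : ℂ) * deriv (deriv G) x + ((1/2 + n : ℝ) : ℂ) * deriv G x) x := by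
    exact (hlin.mul hG'd.hasDerivAt).add ((hGd.hasDerivAt).const_mul _)
  have hrhs : HasDerivAt (fun y : ℝ => (lam : ℂ) * F y) ((lam : ℂ) * deriv F x) x :=
    (hFd.hasDerivAt).const_mul _
  have heq : (fun y : ℝ => ((1 + y : ℝ) : ℂ) * deriv G y + ((1/2 + n : ℝ) : ℂ) * G y)
      =ᶠ[nhds x] fun y => (lam : ℂ) * F y :=
    Filter.eventually_of_mem hmem hsys1
  have eqD : 1 * deriv G x + ((1 + x : ℝ) : ℂ) * deriv (deriv G) x + ((1/2 + n : ℝ) : ℂ) * deriv G x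
      = (lam : ℂ) * deriv F x := by
    have h1 := hlhs.deriv
    have h2 := hrhs.deriv
    rw [← h1, ← h2]
    exact Filter.EventuallyEq.deriv_eq heq
  have h1x := hsys1 x hx
  have h2x := hsys2 x hx
  have hcoef : (|lam| - n - 1/2) * ((|lam| - n - 1/2) + (n - 1/2) + (n + 1/2) + 1)
      = lam^2 - (1/2 + n)^2 := by
    rw [← sq_abs lam]; ring
  rw [hcoef]
  push_cast at eqD h1x h2x ⊢
  linear_combination (-(((x : ℂ) - 1)) * eqD) - ((1/2 + (n:ℂ)) * h1x) - ((lam : ℂ) * h2x)
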